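/- Let S be a finite set of links, each link l with signal power s_l > 0, noise constant c_l > 0, and pairwise relative interferences r_{l'}(l) ≥ 0 with r_l(l) = 0. Define the affectness a_T(l) = c_l·Σ_{l'∈T} r_{l'}(l) for any subset T ⊆ S. Call T a p-signal set if a_T(l) ≤ 1/p for all l ∈ T. Then any p-signal set S can be partitioned into at most ⌈4·(p'/p)²⌉ subsets, each of which is a p'-signal set, for any p' > p. -/

import Mathlib

/-!
Order the links and colour them first-fit with colours `0, …, m-1`, a link joining the first
colour `c` whose earlier members affect it by at most `θ₁ c`. A link that lands in colour `i` was
rejected by every `c < i`, so earlier links affect it by more than `∑_{c<i} θ₁ c`, and hence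
later links by less than `1/p - ∑_{c<i} θ₁ c`. Recolouring every class `i` first-fit in the
reverse order into `K i` subclasses with threshold `θ₂ i` therefore succeeds once
`K i θ₂ i ≥ 1/p - ∑_{c<i} θ₁ c`, and each final class has affectance at most `θ₁ i + θ₂ i`.
For the staircase `K i = b - i`, `i < m`, the thresholds can be made to satisfy
`θ₁ i + θ₂ i = 1/p'` as soon as `(b + 1) p' ≤ (∑_{i<m} (b - i)) p`; taking `b = m = ⌈2p'/p⌉`
(or `b = 3`, `m = 2` when `p' ≤ 5p/4`) leaves at most `⌈4 (p'/p)²⌉` classes.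
-/

open Finset

theorem WellFounded.exists_forall_isLeast {α : Type*} {r : α → α → Prop} (hr : WellFounded r)
    (P : α → (α → ℕ) → ℕ → Prop)
    (hP : ∀ k f g, (∀ j, r j k → f j = g j) → ∀ c, P k f c → P k g c)
    (hex : ∀ k f, ∃ c, P k f c) :
    ∃ f : α → ℕ, ∀ k, IsLeast {c | P k f c} (f k) := by
  classical
  let f : α → ℕ := hr.fix fun k rec => Nat.find (hex k fun j => if h : r j k then rec j h else 0)
  refine ⟨f, fun k => ?_⟩
  let g : α → ℕ := fun j => if _ : r j k then f j else 0
  have hgf : ∀ j, r j k → g j = f j := fun j h => dif_pos h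
  have hfk : f k = Nat.find (hex k g) := hr.fix_eq _ k
  refine ⟨hP k g f hgf _ (hfk ▸ Nat.find_spec (hex k g)), fun c hc => ?_⟩
  rw [hfk]
  exact Nat.find_min' _ (hP k f g (fun j h => (hgf j h).symm) c hc)

section Partition

variable {α : Type*}

def colorLoad (S : Finset α) (r : α → α → Prop) [DecidableRel r] (w : α → α → ℝ) (f : α → ℕ)
    (k : α) (c : ℕ) : ℝ :=
  ∑ j ∈ S with r j k ∧ f j = c, w j k

theorem sum_colorLoad_le {S : Finset α} {r : α → α → Prop} [DecidableRel r] {w : α → α → ℝ}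
    {k : α} (hw : ∀ j, 0 ≤ w j k) (f : α → ℕ) (t : Finset ℕ) :
    ∑ c ∈ t, colorLoad S r w f k c ≤ ∑ j ∈ S with r j k, w j k := by
  simp only [colorLoad, ← filter_filter]
  exact sum_fiberwise_le_sum_of_sum_fiber_nonneg fun _ _ => sum_nonneg fun j _ => hw j

theorem exists_firstFit_coloring {S : Finset α} {r : α → α → Prop} [DecidableRel r]
    (hr : (S : Set α).WellFoundedOn r) {w : α → α → ℝ} (hw : ∀ j k, 0 ≤ w j k)
    (θ : α → ℕ → ℝ) (b : α → ℕ) (hb : ∀ k ∈ S, 0 < b k)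
    (htotal : ∀ k ∈ S, ∑ j ∈ S with r j k, w j k ≤ ∑ c ∈ range (b k), θ k c) :
    ∃ f : α → ℕ, ∀ k ∈ S, f k < b k ∧ colorLoad S r w f k (f k) ≤ θ k (f k) ∧
      ∀ c < f k, θ k c < colorLoad S r w f k c := by
  have hex : ∀ k ∈ S, ∀ f, ∃ c < b k, colorLoad S r w f k c ≤ θ k c := fun k hk f => by
    obtain ⟨c, hc, hle⟩ := exists_le_of_sum_le (nonempty_range_iff.mpr (hb k hk).ne')
      ((sum_colorLoad_le (hw · k) f _).trans (htotal k hk))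
    exact ⟨c, mem_range.mp hc, hle⟩
  obtain ⟨f, hf⟩ := (Set.wellFoundedOn_iff.mp hr).exists_forall_isLeast
    (fun k (f : α → ℕ) c => k ∈ S → colorLoad S r w f k c ≤ θ k c)
    (fun k f g hfg c h hk => by
      have hfilter : ∀ j ∈ S, (r j k ∧ f j = c ↔ r j k ∧ g j = c) := fun j hj =>
        and_congr_right fun hjk => by rw [hfg j ⟨hjk, hj, hk⟩]
      simpa only [colorLoad, filter_congr hfilter] using h hk)
    fun k f => by
      by_cases hk : k ∈ S
      · exact (hex k hk f).imp fun _ h _ => h.2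
      · exact ⟨0, fun h => absurd h hk⟩
  refine ⟨f, fun k hk => ⟨?_, (hf k).1 hk, fun c hc => not_le.mp fun h => ?_⟩⟩
  · obtain ⟨c, hc, hle⟩ := hex k hk f
    exact ((hf k).2 fun _ => hle).trans_lt hc
  · exact absurd ((hf k).2 fun _ => h) (not_le.mpr hc)

theorem sum_eq_sum_filter_lt_add_sum_filter_gt [LinearOrder α] (T : Finset α) (g : α → ℝ)
    {k : α} (hk : g k = 0) : ∑ j ∈ T, g j = ∑ j ∈ T with j < k, g j + ∑ j ∈ T with k < j, g j := by
  rw [sum_filter, sum_filter, ← sum_add_distrib]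
  refine sum_congr rfl fun j _ => ?_
  rcases lt_trichotomy j k with h | rfl | h
  · simp [h, h.not_gt]
  · simp [hk]
  · simp [h, h.not_gt]

theorem sum_filter_and_le_colorLoad_add_colorLoad [LinearOrder α] {S : Finset α}
    {w : α → α → ℝ} (hw : ∀ j k, 0 ≤ w j k) (hww : ∀ k, w k k = 0) (F₁ F₂ : α → ℕ) (k : α) :
    ∑ j ∈ S with F₁ j = F₁ k ∧ F₂ j = F₂ k, w j k ≤
      colorLoad S (· < ·) w F₁ k (F₁ k) +
        colorLoad S (fun j k => k < j ∧ F₁ j = F₁ k) w F₂ k (F₂ k) := by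
  rw [sum_eq_sum_filter_lt_add_sum_filter_gt _ (w · k) (hww k), colorLoad, colorLoad]
  exact add_le_add
    (sum_le_sum_of_subset_of_nonneg (fun j => by simp only [mem_filter]; tauto)
      fun j _ _ => hw j k)
    (sum_le_sum_of_subset_of_nonneg (fun j => by simp only [mem_filter]; tauto)
      fun j _ _ => hw j k)

theorem exists_twoPhase_partition {S : Finset α} {w : α → α → ℝ} {B B' : ℝ}
    (hw : ∀ j k, 0 ≤ w j k) (hww : ∀ k, w k k = 0) (hB : ∀ k ∈ S, ∑ j ∈ S, w j k ≤ B)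
    {m : ℕ} (hm : 0 < m) {K : ℕ → ℕ} (hK : ∀ i < m, 0 < K i) {θ₁ θ₂ : ℕ → ℝ}
    (h₁ : B ≤ ∑ i ∈ range m, θ₁ i)
    (h₂ : ∀ i < m, B - ∑ i' ∈ range i, θ₁ i' ≤ K i * θ₂ i)
    (h₃ : ∀ i < m, θ₁ i + θ₂ i ≤ B') :
    ∃ F : α → Σ _ : ℕ, ℕ, (∀ k ∈ S, F k ∈ (range m).sigma fun i => range (K i)) ∧
      ∀ k ∈ S, ∑ j ∈ S with F j = F k, w j k ≤ B' := by
  classical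
  let _ : LinearOrder α := linearOrderOfSTO WellOrderingRel
  have hwf : ∀ (r : α → α → Prop) [IsStrictOrder α r], (S : Set α).WellFoundedOn r :=
    fun _ _ => S.finite_toSet.wellFoundedOn
  obtain ⟨F₁, hF₁⟩ := exists_firstFit_coloring (hwf (· < ·)) hw (fun _ => θ₁) (fun _ => m)
    (fun _ _ => hm) fun k hk =>
      (sum_le_sum_of_subset_of_nonneg (filter_subset _ _) fun j _ _ => hw j k).trans
        ((hB k hk).trans h₁)
  have hearlier : ∀ k ∈ S, ∑ c ∈ range (F₁ k), θ₁ c ≤ ∑ j ∈ S with j < k, w j k :=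
    fun k hk => calc
      ∑ c ∈ range (F₁ k), θ₁ c ≤ ∑ c ∈ range (F₁ k), colorLoad S (· < ·) w F₁ k c :=
          sum_le_sum fun c hc => ((hF₁ k hk).2.2 c (mem_range.mp hc)).le
      _ ≤ _ := sum_colorLoad_le (hw · k) F₁ _
  have hlater : ∀ k ∈ S, ∑ j ∈ S with k < j, w j k ≤ B - ∑ c ∈ range (F₁ k), θ₁ c :=
    fun k hk => by
      have := sum_eq_sum_filter_lt_add_sum_filter_gt S (w · k) (hww k)
      linarith [hB k hk, hearlier k hk]
  obtain ⟨F₂, hF₂⟩ := exists_firstFit_coloring (r := fun j k => k < j ∧ F₁ j = F₁ k)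
    ((hwf (· > ·)).mono' fun _ _ _ _ h => h.1) hw (fun k _ => θ₂ (F₁ k)) (fun k => K (F₁ k))
    (fun k hk => hK _ (hF₁ k hk).1) fun k hk => calc
      _ ≤ ∑ j ∈ S with k < j, w j k :=
          sum_le_sum_of_subset_of_nonneg (fun j hj => by
            simp only [mem_filter] at hj ⊢; exact ⟨hj.1, hj.2.1⟩) fun j _ _ => hw j k
      _ ≤ B - ∑ c ∈ range (F₁ k), θ₁ c := hlater k hk
      _ ≤ K (F₁ k) * θ₂ (F₁ k) := h₂ _ (hF₁ k hk).1
      _ = ∑ c ∈ range (K (F₁ k)), θ₂ (F₁ k) := by simp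
  refine ⟨fun k => ⟨F₁ k, F₂ k⟩, fun k hk => ?_, fun k hk => ?_⟩
  · simpa using ⟨(hF₁ k hk).1, (hF₂ k hk).1⟩
  calc _ = ∑ j ∈ S with F₁ j = F₁ k ∧ F₂ j = F₂ k, w j k := by simp
    _ ≤ colorLoad S (· < ·) w F₁ k (F₁ k) +
        colorLoad S (fun j k => k < j ∧ F₁ j = F₁ k) w F₂ k (F₂ k) :=
      sum_filter_and_le_colorLoad_add_colorLoad hw hww F₁ F₂ k
    _ ≤ θ₁ (F₁ k) + θ₂ (F₁ k) := add_le_add (hF₁ k hk).2.1 (hF₂ k hk).2.1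
    _ ≤ B' := h₃ _ (hF₁ k hk).1

/-- The budget `R i = B - ∑_{c<i} θ₁ c` of `exists_twoPhase_partition` when its constraints are
tight, i.e. `θ₁ i = R i - R (i + 1)` and `θ₂ i = R i / K i`. -/
noncomputable def budget (B B' : ℝ) (K : ℕ → ℕ) : ℕ → ℝ
  | 0 => B
  | i + 1 => budget B B' K i * (1 + 1 / K i) - B'

theorem mul_budget_staircase {B B' : ℝ} {b i : ℕ} (hi : i ≤ b) :
    ((b : ℝ) + 1 - i) * budget B B' (b - ·) i =
      (b + 1) * B - B' * (∑ y ∈ range i, (b - y) : ℕ) := by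
  induction i with
  | zero => simp [budget]
  | succ i ih =>
    have hcast : ((b - i : ℕ) : ℝ) = b - i := Nat.cast_sub (by omega)
    have hne : (b : ℝ) - i ≠ 0 := by
      have : (i : ℝ) < b := by exact_mod_cast hi
      linarith
    have key : ((b : ℝ) + 1 - (i + 1)) * (1 + 1 / (b - i)) = b + 1 - i := by
      field_simp
      ring
    have ih' := ih (by omega)
    rw [budget, sum_range_succ]
    push_cast [hcast] at ih' ⊢
    linear_combination budget B B' (b - ·) i * key + ih'

theorem budget_staircase_nonpos {B B' : ℝ} {b m : ℕ} (hmb : m ≤ b)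
    (h : ((b : ℝ) + 1) * B ≤ (∑ i ∈ range m, (b - i) : ℕ) * B') :
    budget B B' (b - ·) m ≤ 0 := by
  have hpos : 0 < (b : ℝ) + 1 - m := by
    have : (m : ℝ) ≤ b := by exact_mod_cast hmb
    linarith
  have := mul_budget_staircase (B := B) (B' := B') hmb
  exact nonpos_of_mul_nonpos_right (by linarith) hpos

theorem exists_partition_of_budget_nonpos {S : Finset α} {w : α → α → ℝ} {B B' : ℝ}
    (hw : ∀ j k, 0 ≤ w j k) (hww : ∀ k, w k k = 0) (hB : ∀ k ∈ S, ∑ j ∈ S, w j k ≤ B)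
    {m : ℕ} (hm : 0 < m) {K : ℕ → ℕ} (hK : ∀ i < m, 0 < K i)
    (hbudget : budget B B' K m ≤ 0) :
    ∃ F : α → Σ _ : ℕ, ℕ, (∀ k ∈ S, F k ∈ (range m).sigma fun i => range (K i)) ∧
      ∀ k ∈ S, ∑ j ∈ S with F j = F k, w j k ≤ B' := by
  refine exists_twoPhase_partition hw hww hB hm hK
    (θ₁ := fun i => budget B B' K i - budget B B' K (i + 1))
    (θ₂ := fun i => budget B B' K i / K i) ?_ (fun i hi => ?_) (fun i hi => ?_)
  · rw [sum_range_sub']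
    simp only [budget]
    linarith
  · have hKi : (K i : ℝ) ≠ 0 := by exact_mod_cast (hK i hi).ne'
    rw [sum_range_sub', mul_div_cancel₀ _ hKi]
    simp [budget]
  · simp only [budget]
    exact le_of_eq (by ring)

theorem exists_fin_reindex {β : Type*} {S : Finset α} {T : Finset β} (hT : T.Nonempty)
    {F : α → β} (hF : ∀ k ∈ S, F k ∈ T) :
    ∃ f : α → Fin T.card, ∀ k ∈ S, ∀ j ∈ S, f j = f k ↔ F j = F k := by
  classical
  refine ⟨fun k => if h : F k ∈ T then T.equivFin ⟨F k, h⟩ else ⟨0, hT.card_pos⟩,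
    fun k hk j hj => ?_⟩
  simp only [dif_pos (hF k hk), dif_pos (hF j hj), T.equivFin.apply_eq_iff_eq, Subtype.mk.injEq]

theorem exists_fin_partition_of_staircase {S : Finset α} {w : α → α → ℝ} {B B' : ℝ}
    (hw : ∀ j k, 0 ≤ w j k) (hww : ∀ k, w k k = 0) (hB : ∀ k ∈ S, ∑ j ∈ S, w j k ≤ B)
    {b m : ℕ} (hm : 0 < m) (hmb : m ≤ b)
    (h : ((b : ℝ) + 1) * B ≤ (∑ i ∈ range m, (b - i) : ℕ) * B') :
    ∃ (n : ℕ) (f : α → Fin n), n = ∑ i ∈ range m, (b - i) ∧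
      ∀ i, ∀ k ∈ S.filter (f · = i), ∑ j ∈ S with f j = i, w j k ≤ B' := by
  obtain ⟨F, hFT, hF⟩ := exists_partition_of_budget_nonpos hw hww hB hm
    (fun i hi => Nat.sub_pos_of_lt (hi.trans_le hmb)) (budget_staircase_nonpos hmb h)
  have hT : ((range m).sigma fun i => range (b - i)).Nonempty :=
    ⟨⟨0, 0⟩, by simp [hm, hm.trans_le hmb]⟩
  obtain ⟨f, hf⟩ := exists_fin_reindex hT hFT
  refine ⟨_, f, by simp [card_sigma], fun i k hk => ?_⟩
  obtain ⟨hkS, rfl⟩ := mem_filter.mp hk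
  rw [filter_congr fun j hj => hf k hkS j hj]
  exact hF k hkS

end Partition

theorem sum_range_sub_mul_two (a : ℕ) : (∑ i ∈ range a, (a - i)) * 2 = a * (a + 1) := by
  induction a with
  | zero => simp
  | succ a ih =>
    rw [sum_range_succ']
    simp only [Nat.add_sub_add_right, Nat.sub_zero]
    nlinarith [ih]

theorem exists_staircase_le_ceil {t : ℝ} (ht : 1 < t) :
    ∃ b m : ℕ, 0 < m ∧ m ≤ b ∧ ((b : ℝ) + 1) * t ≤ (∑ i ∈ range m, (b - i) : ℕ) ∧
      ∑ i ∈ range m, (b - i) ≤ ⌈4 * t ^ 2⌉₊ := by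
  rcases le_or_gt t (5 / 4) with ht' | ht'
  · have h4 : 4 < ⌈4 * t ^ 2⌉₊ := Nat.lt_ceil.mpr (by push_cast; nlinarith)
    refine ⟨3, 2, by norm_num, by norm_num, ?_, ?_⟩ <;> simp [sum_range_succ]
    · linarith
    · omega
  set a := ⌈2 * t⌉₊
  have ha : 2 * t ≤ a := Nat.le_ceil _
  have ha' : (a : ℝ) < 2 * t + 1 := Nat.ceil_lt_add_one (by linarith)
  have ha3 : 2 < a := Nat.lt_ceil.mpr (by push_cast; linarith)
  have hsum : ((∑ i ∈ range a, (a - i) : ℕ) : ℝ) * 2 = a * (a + 1) := by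
    exact_mod_cast sum_range_sub_mul_two a
  refine ⟨a, a, by omega, le_rfl, by nlinarith, ?_⟩
  have hpos : 1 ≤ ∑ i ∈ range a, (a - i) := by
    have := sum_range_sub_mul_two a; nlinarith
  have hlt : ((∑ i ∈ range a, (a - i) - 1 : ℕ) : ℝ) < 4 * t ^ 2 := by
    rw [Nat.cast_sub hpos, Nat.cast_one]
    rcases Nat.lt_or_ge a 4 with h | h
    · have : (a : ℝ) = 3 := by exact_mod_cast (by omega : a = 3)
      nlinarith
    · have h4 : (4 : ℝ) ≤ a := by exact_mod_cast h
      nlinarith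
  have := Nat.lt_ceil.mpr hlt
  omega

theorem stmt_5_general
    {ι : Type*} (S : Finset ι)
    (cl : ι → ℝ) (r : ι → ι → ℝ) (p p' : ℝ)
    (hcl : ∀ l, 0 < cl l) (hr : ∀ l' l, 0 ≤ r l' l) (hrll : ∀ l, r l l = 0)
    (hp : 0 < p) (hpp' : p < p')
    -- `S` is a `p`-signal set: the affectness of every link of `S` from `S` is `≤ 1/p`
    (hSig : ∀ l ∈ S, cl l * ∑ l' ∈ S, r l' l ≤ 1 / p) :
    ∃ (n : ℕ) (f : ι → Fin n),
      n ≤ ⌈4 * (p' / p) ^ 2⌉₊ ∧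
      ∀ i : Fin n, ∀ l ∈ S.filter (fun l' => f l' = i),
        cl l * ∑ l' ∈ S.filter (fun l'' => f l'' = i), r l' l ≤ 1 / p' := by
  obtain ⟨b, m, hm, hmb, hbt, hn⟩ := exists_staircase_le_ceil ((one_lt_div hp).mpr hpp')
  have hstair : ((b : ℝ) + 1) * (1 / p) ≤ (∑ i ∈ range m, (b - i) : ℕ) * (1 / p') := by
    have hp' : 0 < p' := hp.trans hpp'
    calc ((b : ℝ) + 1) * (1 / p) = ((b : ℝ) + 1) * (p' / p) / p' := by field_simp
      _ ≤ _ := by rw [mul_one_div]; gcongr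
  obtain ⟨n, f, rfl, hf⟩ := exists_fin_partition_of_staircase (w := fun j k => cl k * r j k)
    (fun j k => mul_nonneg (hcl k).le (hr j k)) (fun k => by simp [hrll])
    (fun k hk => by simpa only [mul_sum] using hSig k hk) hm hmb hstair
  exact ⟨_, f, hn, fun i l hl => by simpa only [mul_sum] using hf i l hl⟩

/-- **Signal-strengthening (Halldórsson–Wattenhofer).** In the abstract affectness
framework, any `p`-signal set `S` can be partitioned into at most `⌈4·(p'/p)²⌉` subsets,
each of which is a `p'`-signal set, for any `p' > p > 0`. -/
theorem stmt_5
    {ι : Type*} [DecidableEq ι] (S : Finset ι)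
    (cl : ι → ℝ) (r : ι → ι → ℝ) (p p' : ℝ)
    (hcl : ∀ l, 0 < cl l) (hr : ∀ l' l, 0 ≤ r l' l) (hrll : ∀ l, r l l = 0)
    (hp : 0 < p) (hpp' : p < p')
    -- `S` is a `p`-signal set: the affectness of every link of `S` from `S` is `≤ 1/p`
    (hSig : ∀ l ∈ S, cl l * ∑ l' ∈ S, r l' l ≤ 1 / p) :
    ∃ (n : ℕ) (f : ι → Fin n),
      n ≤ ⌈4 * (p' / p) ^ 2⌉₊ ∧
      ∀ i : Fin n, ∀ l ∈ S.filter (fun l' => f l' = i),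
        cl l * ∑ l' ∈ S.filter (fun l'' => f l'' = i), r l' l ≤ 1 / p' :=
  stmt_5_general S cl r p p' hcl hr hrll hp hpp' hSig
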